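/- arXiv:2211.16545 — 3 statements merged into one kernel-verified Lean document; each statement's English description precedes it below -/
import Mathlib

section
/- The top line T = ω₁ × {∞₀} of the plank J is not C*-embedded in J: if S ⊆ ω₁ is a set such that both S and ω₁ \ S are uncountable, then the characteristic function of S × {∞₀}, which is a bounded continuous function on T (T being discrete), has no continuous extension to J. -/
open Set Topology

/-- A subset `A` of a topological space `X` is *C-embedded* if every continuous
real-valued function on `A` extends to a continuous real-valued function on `X`. -/
def CEmbedded {X : Type*} [TopologicalSpace X] (A : Set X) : Prop :=
  ∀ f : C(A, ℝ), ∃ g : C(X, ℝ), ∀ a : A, g ↑a = f a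

/-- A subset `A` of a topological space `X` is *C*-embedded* if every *bounded* continuous
real-valued function on `A` extends to a continuous real-valued function on `X`. -/
def CstarEmbedded {X : Type*} [TopologicalSpace X] (A : Set X) : Prop :=
  ∀ f : C(A, ℝ), (∃ M : ℝ, ∀ a : A, |f a| ≤ M) → ∃ g : C(X, ℝ), ∀ a : A, g ↑a = f a

/-- `ω₁`, the set of countable ordinals, as a type carrying the discrete topology. -/
def W1 : Type := (Cardinal.aleph 1).ord.ToType

instance : TopologicalSpace W1 := ⊥
instance : DiscreteTopology W1 := ⟨rfl⟩

/-- The plank `J`: the product of the one-point compactifications of the discrete spaces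
`ω₁` and `ℕ`, with the corner point `(∞₁, ∞₀)` removed. -/
abbrev J : Type := {p : OnePoint W1 × OnePoint ℕ // p ≠ (OnePoint.infty, OnePoint.infty)}

/-- The point `(α, n)` of `J`, for `α ∈ ω₁` and `n ∈ ℕ`. -/
def Jmk (α : W1) (n : ℕ) : J :=
  ⟨(↑α, ↑n), fun h => OnePoint.coe_ne_infty α (congrArg Prod.fst h)⟩

/-- The point `(α, ∞₀)` of the top line `T = ω₁ × {∞₀}` of `J`. -/
def JmkTop (α : W1) : J :=
  ⟨(↑α, OnePoint.infty), fun h => OnePoint.coe_ne_infty α (congrArg Prod.fst h)⟩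

/-- The point `(∞₁, n)` of the right-hand side `R = {∞₁} × ℕ` of `J`. -/
def JmkRight (n : ℕ) : J :=
  ⟨(OnePoint.infty, ↑n), fun h => OnePoint.coe_ne_infty n (congrArg Prod.snd h)⟩

/-!
Restrict a continuous `g : J → ℝ` to the rows `ω₁ × {n}` and the columns `{α} × ℕ`. Each row
converges along the cofinite filter to its value at `(∞₁, n)`, so outside a countable set of
columns `α` every value `g (α, n)` is within `1/4` of `g (∞₁, n)`. Two such columns then have
top values `g (α, ∞₀)`, `g (β, ∞₀)` within `1/2` of each other; but since `S` and its
complement are uncountable, one such column lies in `S` and another outside it.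
-/

open Filter

lemma Set.exists_not_countable_and_not_countable_compl {α : Type*} [Uncountable α] :
    ∃ S : Set α, ¬ S.Countable ∧ ¬ Sᶜ.Countable := by
  obtain ⟨e⟩ : Nonempty (α ⊕ α ≃ α) := by
    rw [← Cardinal.eq, Cardinal.mk_sum, Cardinal.lift_id]
    exact Cardinal.add_eq_self (Cardinal.aleph0_le_mk α)
  have not_countable_range {f : α → α} (hf : Function.Injective f) : ¬ (range f).Countable :=
    fun h => not_countable_univ (by simpa using h.preimage hf)
  refine ⟨range (e ∘ Sum.inl), not_countable_range (e.injective.comp Sum.inl_injective),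
    fun h => not_countable_range (e.injective.comp Sum.inr_injective) (h.mono ?_)⟩
  rintro _ ⟨a, rfl⟩ ⟨b, hb⟩
  exact Sum.inl_ne_inr (e.injective hb)

lemma exists_countable_forall_dist_lt_of_tendsto_cofinite {X ι E : Type*} [Countable ι]
    [PseudoMetricSpace E] {u : X → ι → E} {r : ι → E}
    (hr : ∀ i, Tendsto (u · i) cofinite (𝓝 (r i))) {ε : ℝ} (hε : 0 < ε) :
    ∃ F : Set X, F.Countable ∧ ∀ x ∉ F, ∀ i, dist (u x i) (r i) < ε := by
  have hfin : ∀ i, {x | ¬ dist (u x i) (r i) < ε}.Finite := fun i =>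
    eventually_cofinite.mp (Metric.tendsto_nhds.mp (hr i) ε hε)
  refine ⟨⋃ i, {x | ¬ dist (u x i) (r i) < ε}, countable_iUnion fun i => (hfin i).countable,
    fun x hx i => ?_⟩
  by_contra h
  exact hx (mem_iUnion.mpr ⟨i, h⟩)

lemma discreteTopology_of_continuous_injective_ne_infty {A X : Type*} [TopologicalSpace A]
    [TopologicalSpace X] [DiscreteTopology X] {f : A → OnePoint X} (hf : Continuous f)
    (hinj : Function.Injective f) (hne : ∀ a, f a ≠ OnePoint.infty) : DiscreteTopology A := by
  refine discreteTopology_iff_isOpen_singleton.mpr fun a => ?_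
  obtain ⟨x, hx⟩ := OnePoint.ne_infty_iff_exists.mp (hne a)
  have hopen : IsOpen ({f a} : Set (OnePoint X)) := by
    rw [← hx, ← image_singleton]
    exact OnePoint.isOpen_image_coe.mpr (isOpen_discrete _)
  simpa [← image_singleton, hinj.preimage_image] using hopen.preimage hf

lemma not_cstarEmbedded_range_of_not_extends_indicator {α X : Type*} [TopologicalSpace X]
    {f : α → X} (hf : Function.Injective f) [DiscreteTopology (range f)] {S : Set α}
    (hS : ¬ ∃ g : C(X, ℝ), ∀ a, g (f a) = S.indicator (fun _ => 1) a) :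
    ¬ CstarEmbedded (range f) := by
  intro hemb
  let φ : C(range f, ℝ) :=
    ⟨fun x => (f '' S).indicator (fun _ => 1) (x : X), continuous_of_discreteTopology⟩
  have hφ : ∀ x, |φ x| ≤ 1 := fun x => by
    simpa [φ] using norm_indicator_le_norm_self (fun _ : X => (1 : ℝ)) (x : X) (s := f '' S)
  obtain ⟨g, hg⟩ := hemb φ ⟨1, hφ⟩
  exact hS ⟨g, fun a => (hg ⟨f a, a, rfl⟩).trans
    (indicator_image (s := S) (f := fun _ => (1 : ℝ)) hf)⟩

instance W1.instUncountable : Uncountable W1 := by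
  rw [← Cardinal.aleph0_lt_mk_iff, show Cardinal.mk W1 = Cardinal.aleph 1 from
    Cardinal.mk_ord_toType _]
  exact Cardinal.aleph0_lt_aleph_one

lemma JmkTop_injective : Function.Injective JmkTop :=
  fun _ _ h => OnePoint.coe_injective (congrArg (fun x : J => x.val.1) h)

instance : DiscreteTopology (range JmkTop) := by
  refine discreteTopology_of_continuous_injective_ne_infty (f := fun x => (x : J).val.1)
    (by fun_prop) ?_ ?_
  · rintro ⟨_, α, rfl⟩ ⟨_, β, rfl⟩ h
    rw [OnePoint.coe_injective h]
  · rintro ⟨_, α, rfl⟩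
    exact OnePoint.coe_ne_infty α

section ContinuousOnJ

variable {Y : Type*} [TopologicalSpace Y] {g : J → Y}

lemma tendsto_Jmk_cofinite (hg : Continuous g) (n : ℕ) :
    Tendsto (fun α => g (Jmk α n)) cofinite (𝓝 (g (JmkRight n))) :=
  (OnePoint.continuous_iff_from_discrete _).mp <| hg.comp <|
    (continuous_id.prodMk continuous_const).subtype_mk
      fun _ h => OnePoint.coe_ne_infty n (congrArg Prod.snd h)

lemma tendsto_Jmk_atTop (hg : Continuous g) (α : W1) :
    Tendsto (fun n => g (Jmk α n)) atTop (𝓝 (g (JmkTop α))) := by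
  rw [← Nat.cofinite_eq_atTop]
  exact (OnePoint.continuous_iff_from_discrete _).mp <| hg.comp <|
    (continuous_const.prodMk continuous_id).subtype_mk
      fun _ h => OnePoint.coe_ne_infty α (congrArg Prod.fst h)

end ContinuousOnJ

lemma not_exists_continuousMap_eq_indicator_JmkTop {S : Set W1} (hS : ¬ S.Countable)
    (hSc : ¬ Sᶜ.Countable) :
    ¬ ∃ g : C(J, ℝ), ∀ α, g (JmkTop α) = S.indicator (fun _ => 1) α := by
  rintro ⟨g, hg⟩
  obtain ⟨F, hF, hnear⟩ := exists_countable_forall_dist_lt_of_tendsto_cofinite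
    (tendsto_Jmk_cofinite g.continuous) (by norm_num : (0 : ℝ) < 1 / 4)
  obtain ⟨α, hαS, hαF⟩ := not_subset.mp fun h => hS (hF.mono h)
  obtain ⟨β, hβS, hβF⟩ := not_subset.mp fun h => hSc (hF.mono h)
  have hle : dist (g (JmkTop α)) (g (JmkTop β)) ≤ 1 / 2 := by
    refine le_of_tendsto ((tendsto_Jmk_atTop g.continuous α).dist
      (tendsto_Jmk_atTop g.continuous β)) (Eventually.of_forall fun n => ?_)
    linarith [dist_triangle_right (g (Jmk α n)) (g (Jmk β n)) (g (JmkRight n)),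
      hnear α hαF n, hnear β hβF n]
  rw [hg, hg, indicator_of_mem hαS, indicator_of_notMem hβS, Real.dist_eq] at hle
  norm_num at hle

/-- The top line `T = ω₁ × {∞₀}` is not C*-embedded in `J`; indeed if
`S ⊆ ω₁` and both `S` and its complement are uncountable, then the characteristic function
of `S × {∞₀}` (a bounded continuous function on the discrete space `T`) has no continuous
extension to `J`. -/
theorem statement4 :
    ¬ CstarEmbedded (Set.range JmkTop) ∧
    ∀ S : Set W1, ¬ S.Countable → ¬ Sᶜ.Countable →
      ¬ ∃ g : C(J, ℝ), ∀ α : W1, g (JmkTop α) = S.indicator (fun _ => (1 : ℝ)) α := by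
  obtain ⟨S, hS, hSc⟩ := exists_not_countable_and_not_countable_compl (α := W1)
  exact ⟨not_cstarEmbedded_range_of_not_extends_indicator JmkTop_injective
      (not_exists_continuousMap_eq_indicator_JmkTop hS hSc),
    fun _ => not_exists_continuousMap_eq_indicator_JmkTop⟩
end

section
/- The right-hand side R = {∞₁} × ℕ of the plank P is not C-embedded in P: the continuous function R → ℝ defined by (∞₁, n) ↦ n has no continuous extension to P. In fact, for every continuous g : P → ℝ the function n ↦ g(∞₁, n) is bounded. -/
open Set Topology

/-- The Stone–Čech compactification `βℕ` of the discrete space `ℕ`. -/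
abbrev betaN : Type := StoneCech ℕ

/-- The Stone–Čech remainder `ℕ* = βℕ \ ℕ`. -/
def Nstar : Set betaN := (Set.range (stoneCechUnit : ℕ → betaN))ᶜ

/-- The plank `P`: the subspace `(ω₁⁺ × βℕ) \ ({∞₁} × ℕ*)` of `ω₁⁺ × βℕ`, where `ω₁⁺` is the
one-point compactification of the discrete space `ω₁`. -/
abbrev P : Type :=
  {p : OnePoint W1 × betaN // ¬ (p.1 = OnePoint.infty ∧ p.2 ∈ Nstar)}

/-- The point `(∞₁, n)` of the right-hand side `R = {∞₁} × ℕ` of `P`. -/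
def PmkR (n : ℕ) : P :=
  ⟨(OnePoint.infty, stoneCechUnit n), fun h => h.2 ⟨n, rfl⟩⟩

/-! For each `n`, continuity at `(∞₁, n)` makes `|g (α, n) - g (∞₁, n)| < 1` for all but finitely
many `α < ω₁`. Countably many `n` exclude only countably many `α`, so one `α` works for every `n`;
then `g (∞₁, n)` is within `1` of the column `g (α, ·)`, which is bounded because `βℕ` is compact.
Hence `n ↦ n` does not extend, although it is continuous on the discrete copy `R` of `ℕ`. -/

lemma exists_forall_of_forall_eventually_cofinite {ι α : Type*} [Countable ι] [Uncountable α]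
    {p : ι → α → Prop} (h : ∀ i, ∀ᶠ a in Filter.cofinite, p i a) : ∃ a, ∀ i, p i a := by
  have hbad : Set.Countable (⋃ i, {a | ¬ p i a}) := countable_iUnion fun i => (h i).countable
  by_contra! hall
  exact not_countable_univ (hbad.mono fun a _ => by simpa using hall a)

lemma CEmbedded.exists_extend_of_isEmbedding {X Y : Type*} [TopologicalSpace X]
    [TopologicalSpace Y] {e : Y → X} (he : IsEmbedding e) (hC : CEmbedded (range e))
    (u : C(Y, ℝ)) : ∃ g : C(X, ℝ), ∀ y, g (e y) = u y := by
  obtain ⟨g, hg⟩ := hC (u.comp (he.toHomeomorph.symm : C(range e, Y)))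
  exact ⟨g, fun y => (hg ⟨e y, y, rfl⟩).trans (congrArg u (he.toHomeomorph_symm_apply y))⟩

instance : Uncountable W1 := by
  rw [← Cardinal.aleph0_lt_mk_iff, W1, Cardinal.mk_ord_toType]
  exact Cardinal.aleph0_lt_aleph_one

def Pmk (α : W1) (x : betaN) : P :=
  ⟨((α : OnePoint W1), x), fun h => OnePoint.coe_ne_infty α h.1⟩

lemma continuous_Pmk (α : W1) : Continuous (Pmk α) := by
  unfold Pmk; fun_prop

lemma tendsto_Pmk_PmkR (n : ℕ) :
    Filter.Tendsto (fun α : W1 => Pmk α (stoneCechUnit n)) Filter.cofinite (𝓝 (PmkR n)) := by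
  have h := OnePoint.tendsto_coe_infty (X := W1)
  rw [Filter.coclosedCompact_eq_cocompact, Filter.cocompact_eq_cofinite] at h
  exact tendsto_subtype_rng.2 (h.prodMk_nhds tendsto_const_nhds)

lemma isEmbedding_PmkR : IsEmbedding PmkR :=
  .of_comp (by unfold PmkR; fun_prop) continuous_subtype_val
    ((isEmbedding_prodMkRight _).comp isEmbedding_stoneCechUnit)

theorem exists_abs_apply_PmkR_le (g : C(P, ℝ)) : ∃ M : ℝ, ∀ n : ℕ, |g (PmkR n)| ≤ M := by
  obtain ⟨α, hα⟩ := exists_forall_of_forall_eventually_cofinite fun n =>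
    ((g.continuous.tendsto _).comp (tendsto_Pmk_PmkR n)).eventually
      (Metric.ball_mem_nhds _ one_pos)
  let h : C(betaN, ℝ) := g.comp ⟨Pmk α, continuous_Pmk α⟩
  refine ⟨‖h‖ + 1, fun n => ?_⟩
  have hnear : g (PmkR n) ∈ Metric.ball (h (stoneCechUnit n)) 1 := Metric.mem_ball_comm.1 (hα n)
  calc |g (PmkR n)| ≤ ‖h (stoneCechUnit n)‖ + 1 :=
        norm_le_of_mem_closedBall (Metric.ball_subset_closedBall hnear)
    _ ≤ ‖h‖ + 1 := by gcongr; exact h.norm_coe_le_norm _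

/-- The right-hand side `R = {∞₁} × ℕ` of the plank `P` is not C-embedded in
`P`: the continuous function `(∞₁, n) ↦ n` on `R` has no continuous extension to `P`; in
fact, for every continuous `g : P → ℝ` the function `n ↦ g (∞₁, n)` is bounded. -/
theorem statement8 :
    ¬ CEmbedded (Set.range PmkR) ∧
    (¬ ∃ g : C(P, ℝ), ∀ n : ℕ, g (PmkR n) = (n : ℝ)) ∧
    (∀ g : C(P, ℝ), ∃ M : ℝ, ∀ n : ℕ, |g (PmkR n)| ≤ M) := by
  have hno : ¬ ∃ g : C(P, ℝ), ∀ n : ℕ, g (PmkR n) = (n : ℝ) := by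
    rintro ⟨g, hg⟩
    obtain ⟨M, hM⟩ := exists_abs_apply_PmkR_le g
    obtain ⟨n, hn⟩ := exists_nat_gt M
    have := hM n
    rw [hg n, abs_of_nonneg n.cast_nonneg] at this
    linarith
  refine ⟨fun hR => hno ?_, hno, exists_abs_apply_PmkR_le⟩
  exact hR.exists_extend_of_isEmbedding isEmbedding_PmkR ⟨(↑), continuous_of_discreteTopology⟩
end

section
/- There exists a realcompact Tychonoff (completely regular Hausdorff) space X containing closed copies N₁ and N₂ of ℕ such that N₁ and N₂ are each C*-embedded in X, neither of N₁, N₂ meets the closure of the other (so N₁ ∪ N₂ is itself a closed copy of ℕ in X), and N₁ ∪ N₂ is not C*-embedded in X. -/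
open Set Topology

universe u

/-- A topological space is *realcompact* if it admits a closed embedding into a power
of the real line. -/
def Realcompact (X : Type u) [TopologicalSpace X] : Prop :=
  ∃ (ι : Type u) (f : X → ι → ℝ), Topology.IsClosedEmbedding f
/-- `N` is a *closed copy of ℕ* in `X`: a countably infinite closed subset all of whose
points are isolated in the subspace topology. -/
def ClosedCopyOfNat {X : Type*} [TopologicalSpace X] (N : Set X) : Prop :=
  N.Countable ∧ N.Infinite ∧ IsClosed N ∧ DiscreteTopology N

/-!
The space `X` has countably many rows; row `r` consists of isolated points `cell r γ`
(`γ ∈ ℝ`) and a point `head r` whose neighbourhoods contain all but countably many cells of its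
row. For each `γ ∈ ℝ` a point `apex γ` is added, approached by the column `(cell r γ)ᵣ` along a
free ultrafilter `ultra γ` placed on the even rows and, identically, on the odd rows; `ultra γ`
is chosen so that a fixed enumeration of `ℚ` converges to `γ` along it.

Every continuous `g` agrees with `g (head r)` on all but countably many cells of row `r`, so for
some `γ` it agrees with the heads on the whole column of `γ`. Hence `g` cannot be `0` on the even
heads and `1` on the odd heads, as it would have both limits at `apex γ`; each parity class alone
is C*-embedded by sending `apex γ` to the `ultra γ`-limit. For realcompactness, a point `p` of the
closure of `X` in `ℝ ^ C(X, ℝ)` agrees with an evaluation on every finite family of functions.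
The row height `1 / (r + 1)`, the coordinate `γ` of `apex γ` (continuous thanks to the choice of
`ultra γ`) and indicators of cells then locate a single point at which `p` is the evaluation.
-/

open Filter Function TopologicalSpace

section EvalMap

variable {Y : Type u} [TopologicalSpace Y]

variable (Y) in
def evalMap (y : Y) (f : C(Y, ℝ)) : ℝ := f y

theorem continuous_evalMap : Continuous (evalMap Y) :=
  continuous_pi fun f => f.continuous

theorem exists_forall_apply_eq_of_mem_closure {p : C(Y, ℝ) → ℝ}
    (hp : p ∈ closure (range (evalMap Y))) {s : Set C(Y, ℝ)} (hs : s.Finite) :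
    ∃ y, ∀ f ∈ s, f y = p f := by
  by_contra! hne
  lift s to Finset C(Y, ℝ) using hs
  let F : C(Y, ℝ) := ∑ f ∈ s, (f - .const Y (p f)) ^ 2
  have hF : ∀ y, F y ≠ 0 := fun y hy => by
    obtain ⟨f, hf, hfy⟩ := hne y
    simp only [F, ContinuousMap.coe_sum, Finset.sum_apply, ContinuousMap.coe_pow,
      Pi.pow_apply, ContinuousMap.coe_sub, Pi.sub_apply, ContinuousMap.const_apply] at hy
    rw [Finset.sum_eq_zero_iff_of_nonneg fun _ _ => sq_nonneg _] at hy
    exact hfy (sub_eq_zero.1 (pow_eq_zero_iff two_ne_zero |>.1 (hy f hf)))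
  let G : C(Y, ℝ) := ⟨fun y => (F y)⁻¹, F.continuous.inv₀ hF⟩
  -- `q ↦ (∑ f ∈ s, (q f - p f) ^ 2) * q G` is continuous, equals `F * F⁻¹ = 1` on the range,
  -- and vanishes at `p`.
  have key : EqOn (fun q : C(Y, ℝ) → ℝ => (∑ f ∈ s, (q f - p f) ^ 2) * q G) 1
      (closure (range (evalMap Y))) := by
    refine EqOn.closure ?_ (by fun_prop) continuous_const
    rintro _ ⟨y, rfl⟩
    have : (∑ f ∈ s, (f y - p f) ^ 2) = F y := by simp [F]
    simp [evalMap, this, G, hF y]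
  simpa using key hp

theorem isInducing_evalMap [CompletelyRegularSpace Y] : IsInducing (evalMap Y) := by
  refine isInducing_iff_nhds.2 fun y => le_antisymm
    (continuous_evalMap.tendsto y).le_comap ?_
  intro U hU
  obtain ⟨f, hf, hfy, hfU⟩ := CompletelyRegularSpace.completely_regular_isOpen y (interior U)
    isOpen_interior (mem_interior_iff_mem_nhds.2 hU)
  let g : C(Y, ℝ) := ⟨fun z => f z, continuous_subtype_val.comp hf⟩
  refine ⟨{q | q g < 1}, (isOpen_lt (continuous_apply g) continuous_const).mem_nhds ?_, ?_⟩
  · simp [evalMap, g, hfy]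
  · intro z hz
    by_contra hzU
    have := hfU (fun h => hzU (interior_subset h))
    simp [evalMap, g, this] at hz

theorem realcompact_of_closure_range_evalMap_subset [T0Space Y] [CompletelyRegularSpace Y]
    (h : closure (range (evalMap Y)) ⊆ range (evalMap Y)) : Realcompact Y :=
  ⟨C(Y, ℝ), evalMap Y, ⟨⟨isInducing_evalMap, isInducing_evalMap.injective⟩,
    closure_subset_iff_isClosed.1 h⟩⟩

end EvalMap

theorem Filter.Tendsto.eventually_eq_of_countableInterFilter {α β : Type*}
    [TopologicalSpace β] [T1Space β] [FirstCountableTopology β] {l : Filter α}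
    [CountableInterFilter l] {f : α → β} {c : β} (h : Tendsto f l (𝓝 c)) :
    ∀ᶠ a in l, f a = c := by
  obtain ⟨s, hs⟩ := (𝓝 c).exists_antitone_basis
  filter_upwards [eventually_countable_forall.2 fun n => h (hs.mem n)] with a ha
  by_contra hne
  obtain ⟨n, hn⟩ := hs.mem_iff.1 (compl_singleton_mem_nhds (Ne.symm hne))
  exact hn (ha n) rfl

instance Filter.countableInterFilter_cocountable {α : Type*} :
    CountableInterFilter (cocountable : Filter α) :=
  cardinalInterFilter_aleph_one_iff.1 inferInstance

instance : NeBot (cocountable : Filter ℝ) := by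
  rw [neBot_iff, Ne, ← empty_mem_iff_bot, mem_cocountable, compl_empty]
  exact Cardinal.not_countable_real

theorem Ultrafilter.exists_tendsto_of_abs_le {α : Type*} (𝒰 : Ultrafilter α) {v : α → ℝ}
    {M : ℝ} (hv : ∀ a, |v a| ≤ M) : ∃ c, Tendsto v 𝒰 (𝓝 c) := by
  obtain ⟨c, -, hc⟩ := isCompact_Icc.ultrafilter_le_nhds (𝒰.map v)
    (le_principal_iff.2 (mem_map.2 (univ_mem' fun a => abs_le.1 (hv a))))
  exact ⟨c, hc⟩

noncomputable section

namespace CstarUnion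

def ratSeq (n : ℕ) : ℝ := ((Denumerable.eqv ℚ).symm n : ℝ)

instance (γ : ℝ) : NeBot (comap ratSeq (𝓝[≠] γ)) := by
  refine comap_neBot fun t ht => ?_
  obtain ⟨u, hu, hut⟩ := mem_nhdsWithin_iff_exists_mem_nhds_inter.1 ht
  have hrange : range ratSeq = range ((↑) : ℚ → ℝ) :=
    (Denumerable.eqv ℚ).symm.surjective.range_comp _
  have hdense : Dense (range ratSeq) := by rw [hrange]; exact Rat.denseRange_cast
  obtain ⟨_, ⟨⟨n, rfl⟩, hne⟩, hxu⟩ := (hdense.sdiff_singleton γ).inter_nhds_nonempty hu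
  exact ⟨n, hut ⟨hxu, hne⟩⟩

def ultra (γ : ℝ) : Ultrafilter ℕ := .of (comap ratSeq (𝓝[≠] γ))

theorem tendsto_ratSeq_ultra (γ : ℝ) : Tendsto ratSeq (ultra γ) (𝓝 γ) :=
  (tendsto_comap.mono_left (Ultrafilter.of_le _)).mono_right nhdsWithin_le_nhds

theorem ultra_le_atTop (γ : ℝ) : (ultra γ : Filter ℕ) ≤ atTop :=
  Nat.cofinite_eq_atTop ▸ (Ultrafilter.of_le _).trans
    ((comap_mono (nhdsNE_le_cofinite γ)).trans (comap_cofinite_le _))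

def colFilter (γ : ℝ) : Filter ℕ := map (2 * ·) (ultra γ) ⊔ map (2 * · + 1) (ultra γ)

theorem colFilter_le_atTop (γ : ℝ) : colFilter γ ≤ atTop :=
  sup_le ((StrictMono.tendsto_atTop fun _ _ h => by omega).mono_left (ultra_le_atTop γ))
    ((StrictMono.tendsto_atTop fun _ _ h => by omega).mono_left (ultra_le_atTop γ))

theorem tendsto_colFilter_of_tendsto_ultra {β : Type*} {w : ℕ → β} {γ : ℝ} {l : Filter β}
    (h : Tendsto w (ultra γ) l) : Tendsto (fun r => w (r / 2)) (colFilter γ) l := by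
  refine tendsto_sup.2 ⟨?_, ?_⟩ <;> rw [tendsto_map'_iff] <;>
    exact h.congr fun n => congrArg w (by dsimp only; omega)

inductive X : Type
  | head (r : ℕ)
  | cell (r : ℕ) (γ : ℝ)
  | apex (γ : ℝ)

open X

def nhdsX : X → Filter X
  | head r => pure (head r) ⊔ map (cell r) cocountable
  | cell r γ => pure (cell r γ)
  | apex γ => pure (apex γ) ⊔ map (cell · γ) (colFilter γ)

instance : TopologicalSpace X := .mkOfNhds nhdsX

theorem nhds_eq_nhdsX (x : X) : 𝓝 x = nhdsX x := by
  refine TopologicalSpace.nhds_mkOfNhds _ _ (fun x => ?_) fun x s hs => ?_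
  · cases x <;> simp [nhdsX]
  · cases x with
    | head r => simp_all [nhdsX, eventually_sup]
    | cell r γ => simp_all [nhdsX]
    | apex γ => simp_all [nhdsX, eventually_sup]; exact hs.2

theorem nhds_head (r : ℕ) : 𝓝 (head r) = pure (head r) ⊔ map (cell r) cocountable :=
  nhds_eq_nhdsX _

theorem nhds_cell (r : ℕ) (γ : ℝ) : 𝓝 (cell r γ) = pure (cell r γ) :=
  nhds_eq_nhdsX _

theorem nhds_apex (γ : ℝ) :
    𝓝 (apex γ) = pure (apex γ) ⊔ map (cell · γ) (colFilter γ) :=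
  nhds_eq_nhdsX _

theorem isOpen_iff {s : Set X} : IsOpen s ↔
    (∀ r, head r ∈ s → ∀ᶠ γ in cocountable, cell r γ ∈ s) ∧
    ∀ γ, apex γ ∈ s → ∀ᶠ r in colFilter γ, cell r γ ∈ s := by
  simp only [isOpen_iff_mem_nhds]
  refine ⟨fun h => ⟨fun r hr => ?_, fun γ hγ => ?_⟩, fun ⟨h₁, h₂⟩ x hx => ?_⟩
  · have := h _ hr
    rw [nhds_head] at this
    exact this.2
  · have := h _ hγ
    rw [nhds_apex] at this
    exact this.2
  · cases x with
    | head r => exact nhds_head r ▸ mem_sup.2 ⟨hx, h₁ r hx⟩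
    | cell r γ => exact nhds_cell r γ ▸ hx
    | apex γ => exact nhds_apex γ ▸ mem_sup.2 ⟨hx, h₂ γ hx⟩

theorem continuousAt_cell {Y : Type*} [TopologicalSpace Y] (f : X → Y) (r : ℕ) (γ : ℝ) :
    ContinuousAt f (cell r γ) := by
  simp [ContinuousAt, nhds_cell, tendsto_pure_nhds]

theorem continuousAt_head_iff {Y : Type*} [TopologicalSpace Y] {f : X → Y} {r : ℕ} :
    ContinuousAt f (head r) ↔
      Tendsto (fun γ => f (cell r γ)) cocountable (𝓝 (f (head r))) := by
  simp [ContinuousAt, nhds_head, tendsto_sup, tendsto_map'_iff, comp_def, tendsto_pure_nhds]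

theorem continuousAt_apex_iff {Y : Type*} [TopologicalSpace Y] {f : X → Y} {γ : ℝ} :
    ContinuousAt f (apex γ) ↔
      Tendsto (fun r => f (cell r γ)) (colFilter γ) (𝓝 (f (apex γ))) := by
  simp [ContinuousAt, nhds_apex, tendsto_sup, tendsto_map'_iff, comp_def, tendsto_pure_nhds]

theorem continuous_iff {Y : Type*} [TopologicalSpace Y] {f : X → Y} : Continuous f ↔
    (∀ r, Tendsto (fun γ => f (cell r γ)) cocountable (𝓝 (f (head r)))) ∧
    ∀ γ, Tendsto (fun r => f (cell r γ)) (colFilter γ) (𝓝 (f (apex γ))) := by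
  rw [continuous_iff_continuousAt]
  refine ⟨fun h => ⟨fun r => continuousAt_head_iff.1 (h _),
    fun γ => continuousAt_apex_iff.1 (h _)⟩, fun ⟨h₁, h₂⟩ x => ?_⟩
  cases x with
  | head r => exact continuousAt_head_iff.2 (h₁ r)
  | cell r γ => exact continuousAt_cell f r γ
  | apex γ => exact continuousAt_apex_iff.2 (h₂ γ)

theorem eventually_ne_colFilter (γ : ℝ) (r : ℕ) : ∀ᶠ r' in colFilter γ, r' ≠ r :=
  (colFilter_le_atTop γ) (eventually_ne_atTop r)

instance : T1Space X := by
  refine ⟨fun x => isOpen_compl_iff.1 <| isOpen_iff.2 ⟨fun r _ => ?_, fun γ _ => ?_⟩⟩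
  · cases x with
    | cell r₀ γ₀ =>
      filter_upwards [eventually_cocardinal_ne γ₀] with γ hγ
      simp [hγ]
    | _ => simp
  · cases x with
    | cell r₀ γ₀ =>
      filter_upwards [eventually_ne_colFilter γ r₀] with r hr
      simp [hr]
    | _ => simp

def row (r : ℕ) : Set X := insert (head r) (range (cell r))

def col (γ : ℝ) : Set X := insert (apex γ) (range (cell · γ))

theorem isClopen_inter_row {U : Set X} {r : ℕ} (hU : IsOpen U) (hr : head r ∈ U) :
    IsClopen (U ∩ row r) := by
  obtain ⟨hU₁, -⟩ := isOpen_iff.1 hU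
  refine ⟨isOpen_compl_iff.1 <| isOpen_iff.2 ⟨fun r' hr' => ?_, fun γ _ => ?_⟩,
    isOpen_iff.2 ⟨fun r' hr' => ?_, fun γ hγ => ?_⟩⟩
  · have : r' ≠ r := by rintro rfl; exact hr' ⟨hr, by simp [row]⟩
    exact univ_mem' fun γ => by simp [row, this.symm]
  · filter_upwards [eventually_ne_colFilter γ r] with r' hr'
    simp [row, hr'.symm]
  · obtain rfl : r' = r := by simpa [row] using hr'.2
    filter_upwards [hU₁ r' hr'.1] with γ hγ using ⟨hγ, by simp [row]⟩
  · simp [row] at hγ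

theorem isClopen_inter_col {U : Set X} {γ : ℝ} (hU : IsOpen U) (hγ : apex γ ∈ U) :
    IsClopen (U ∩ col γ) := by
  obtain ⟨-, hU₂⟩ := isOpen_iff.1 hU
  refine ⟨isOpen_compl_iff.1 <| isOpen_iff.2 ⟨fun r _ => ?_, fun γ' hγ' => ?_⟩,
    isOpen_iff.2 ⟨fun r hr => ?_, fun γ' hγ' => ?_⟩⟩
  · filter_upwards [eventually_cocardinal_ne γ] with γ' hγ'
    simp [col, hγ'.symm]
  · have : γ' ≠ γ := by rintro rfl; exact hγ' ⟨hγ, by simp [col]⟩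
    exact univ_mem' fun r => by simp [col, this.symm]
  · simp [col] at hr
  · obtain rfl : γ' = γ := by simpa [col] using hγ'.2
    filter_upwards [hU₂ γ' hγ'.1] with r hr using ⟨hr, by simp [col]⟩

theorem isClopen_singleton_cell (r : ℕ) (γ : ℝ) : IsClopen {cell r γ} :=
  ⟨isClosed_singleton, isOpen_iff.2 ⟨by simp, by simp⟩⟩

theorem isTopologicalBasis_isClopen : IsTopologicalBasis {s : Set X | IsClopen s} := by
  refine isTopologicalBasis_of_isOpen_of_nhds (fun _ h => h.isOpen) fun x U hx hU => ?_
  cases x with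
  | head r => exact ⟨_, isClopen_inter_row hU hx, ⟨hx, by simp [row]⟩, inter_subset_left⟩
  | cell r γ => exact ⟨_, isClopen_singleton_cell r γ, rfl, singleton_subset_iff.2 hx⟩
  | apex γ => exact ⟨_, isClopen_inter_col hU hx, ⟨hx, by simp [col]⟩, inter_subset_left⟩

instance : CompletelyRegularSpace X := .of_isTopologicalBasis_clopens isTopologicalBasis_isClopen

def rowFun (a : ℕ → ℝ) (b : ℝ → ℝ) : X → ℝ
  | head r => a r
  | cell r _ => a r
  | apex γ => b γ

theorem continuous_rowFun {a : ℕ → ℝ} {b : ℝ → ℝ}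
    (h : ∀ γ, Tendsto a (colFilter γ) (𝓝 (b γ))) : Continuous (rowFun a b) :=
  continuous_iff.2 ⟨fun _ => tendsto_const_nhds, h⟩

def rowHeight : C(X, ℝ) :=
  ⟨rowFun (fun r => 1 / (r + 1)) 0, continuous_rowFun fun γ =>
    tendsto_one_div_add_atTop_nhds_zero_nat.mono_left (colFilter_le_atTop γ)⟩

def apexCoord : C(X, ℝ) :=
  ⟨rowFun (fun r => ratSeq (r / 2)) id, continuous_rowFun fun γ =>
    tendsto_colFilter_of_tendsto_ultra (tendsto_ratSeq_ultra γ)⟩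

theorem rowHeight_eq_zero_iff {y : X} : rowHeight y = 0 ↔ ∃ γ, y = apex γ := by
  cases y <;> simp [rowHeight, rowFun] <;> positivity

theorem rowHeight_eq_iff {y : X} {r : ℕ} : rowHeight y = 1 / (r + 1) ↔ y ∈ row r := by
  cases y <;> simp [rowHeight, rowFun, row]
  · exact eq_comm
  · exact (Nat.cast_add_one_pos r).ne

theorem continuous_of_support_subset {f : X → ℝ} {r : ℕ} {E : Set ℝ} (hE : E.Countable)
    (hf : support f ⊆ cell r '' E) : Continuous f := by
  have hzero : ∀ x, (∀ γ ∈ E, x ≠ cell r γ) → f x = 0 := fun x hx =>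
    notMem_support.1 fun h => by obtain ⟨γ, hγ, rfl⟩ := hf h; exact hx γ hγ rfl
  refine continuous_iff.2 ⟨fun r' => ?_, fun γ => ?_⟩
  · refine tendsto_const_nhds.congr' ?_
    filter_upwards [mem_cocountable.2 (by rwa [compl_compl])] with γ (hγ : γ ∉ E)
    rw [hzero _ (by simp), hzero _ fun γ' hγ' h => by cases h; exact hγ hγ']
  · refine tendsto_const_nhds.congr' ?_
    filter_upwards [eventually_ne_colFilter γ r] with r' hr'
    rw [hzero _ (by simp), hzero _ fun γ' _ h => by cases h; exact hr' rfl]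

def cellIndicator (r : ℕ) (γ : ℝ) : C(X, ℝ) :=
  ⟨({cell r γ} : Set X).indicator 1, continuous_of_support_subset (countable_singleton γ)
    (by rw [image_singleton]; exact support_indicator_subset)⟩

def cellCoord : X → ℝ
  | cell _ γ => γ
  | _ => 0

theorem closedCopyOfNat_of_subset_range_head {N : Set X} (hN : N ⊆ range head)
    (hinf : N.Infinite) : ClosedCopyOfNat N := by
  have hN' : IsClosed N ∧ IsDiscrete N := isClosed_and_discrete_iff.2 fun x => by
    rw [disjoint_principal_right]
    suffices ∀ᶠ y in 𝓝[≠] x, y ∉ range head from this.mono fun y hy hyN => hy (hN hyN)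
    rw [eventually_nhdsWithin_iff]
    cases x <;> simp [nhds_head, nhds_cell, nhds_apex, eventually_sup]
  exact ⟨(countable_range head).mono hN, hinf, hN'.1, isDiscrete_iff_discreteTopology.1 hN'.2⟩

def heads (k : ℕ) : Set X := range fun n => head (2 * n + k)

theorem heads_subset_range_head (k : ℕ) : heads k ⊆ range head :=
  range_subset_iff.2 fun _ => mem_range_self _

theorem heads_infinite (k : ℕ) : (heads k).Infinite :=
  infinite_range_of_injective fun a b h => by simpa using h

theorem closedCopyOfNat_heads (k : ℕ) : ClosedCopyOfNat (heads k) :=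
  closedCopyOfNat_of_subset_range_head (heads_subset_range_head k) (heads_infinite k)

theorem disjoint_heads_zero_one : Disjoint (heads 0) (heads 1) := by
  refine disjoint_left.2 ?_
  rintro _ ⟨a, rfl⟩ ⟨b, h⟩
  simp only [head.injEq] at h
  omega

theorem cstarEmbedded_heads {k : ℕ} (hk : k < 2) : CstarEmbedded (heads k) := by
  rintro f ⟨M, hM⟩
  let v n := f ⟨head (2 * n + k), n, rfl⟩
  choose b hb using fun γ => (ultra γ).exists_tendsto_of_abs_le (v := v) fun n => hM _
  refine ⟨⟨rowFun (fun r => v (r / 2)) b,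
    continuous_rowFun fun γ => tendsto_colFilter_of_tendsto_ultra (hb γ)⟩, ?_⟩
  rintro ⟨_, n, rfl⟩
  exact congrArg v (by omega)

theorem closedCopyOfNat_heads_union : ClosedCopyOfNat (heads 0 ∪ heads 1) :=
  closedCopyOfNat_of_subset_range_head
    (union_subset (heads_subset_range_head 0) (heads_subset_range_head 1))
    ((heads_infinite 0).mono subset_union_left)

theorem not_cstarEmbedded_heads_union : ¬ CstarEmbedded (heads 0 ∪ heads 1) := by
  have : DiscreteTopology ↥(heads 0 ∪ heads 1) := closedCopyOfNat_heads_union.2.2.2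
  intro h
  obtain ⟨g, hg⟩ := h ⟨(heads 1).indicator 1 ∘ (↑), continuous_of_discreteTopology⟩
    ⟨1, fun a => by by_cases ha : (a : X) ∈ heads 1 <;> simp [ha]⟩
  have hg₀ (n : ℕ) : g (head (2 * n)) = 0 := by
    have : head (2 * n) ∉ heads 1 := disjoint_heads_zero_one.notMem_of_mem_left ⟨n, rfl⟩
    simpa [this] using hg ⟨_, .inl ⟨n, rfl⟩⟩
  have hg₁ (n : ℕ) : g (head (2 * n + 1)) = 1 := by
    simpa [show head (2 * n + 1) ∈ heads 1 from ⟨n, rfl⟩] using hg ⟨_, .inr ⟨n, rfl⟩⟩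
  obtain ⟨γ, hγ⟩ : ∃ γ, ∀ r, g (cell r γ) = g (head r) :=
    (eventually_countable_forall.2 fun r => (continuousAt_head_iff.1
      g.continuous.continuousAt).eventually_eq_of_countableInterFilter).exists
  obtain ⟨h₀, h₁⟩ :=
    tendsto_sup.1 (continuousAt_apex_iff.1 (g.continuous.continuousAt (x := apex γ)))
  rw [tendsto_map'_iff] at h₀ h₁
  have e₀ : g (apex γ) = 0 :=
    tendsto_nhds_unique h₀ (tendsto_const_nhds.congr fun n => by simp [hγ, hg₀])
  have e₁ : g (apex γ) = 1 :=
    tendsto_nhds_unique h₁ (tendsto_const_nhds.congr fun n => by simp [hγ, hg₁])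
  exact zero_ne_one (e₀.symm.trans e₁)

section Closure

variable {p : C(X, ℝ) → ℝ}

theorem apply_apex_eq_of_mem_closure (hp : p ∈ closure (range (evalMap X)))
    (h : p rowHeight = 0) (g : C(X, ℝ)) :
    g (apex (p apexCoord)) = p g := by
  obtain ⟨y, hy⟩ := exists_forall_apply_eq_of_mem_closure hp
    (s := {rowHeight, apexCoord, g}) (toFinite _)
  simp only [mem_insert_iff, mem_singleton_iff, forall_eq_or_imp, forall_eq] at hy
  obtain ⟨γ, rfl⟩ := rowHeight_eq_zero_iff.1 (hy.1.trans h)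
  obtain rfl : γ = p apexCoord := hy.2.1
  exact hy.2.2

theorem apply_head_eq_of_mem_closure (hp : p ∈ closure (range (evalMap X))) {r : ℕ}
    (h : p rowHeight = 1 / (r + 1))
    (hcell : ∀ γ, p (cellIndicator r γ) = 0) (g : C(X, ℝ)) : g (head r) = p g := by
  by_contra hne
  set E := {γ | g (cell r γ) ≠ g (head r)}
  have hE : E.Countable := mem_cocountable.1
    (continuousAt_head_iff.1 g.continuous.continuousAt).eventually_eq_of_countableInterFilter
  -- A point realizing `rowHeight`, `g` and `ψ` can only be `cell r (p ψ)`, whose indicator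
  -- `p` sends to `0`.
  let ψ : C(X, ℝ) := ⟨(cell r '' E).indicator cellCoord,
    continuous_of_support_subset hE support_indicator_subset⟩
  obtain ⟨y, hy⟩ := exists_forall_apply_eq_of_mem_closure hp
    (s := {rowHeight, g, ψ, cellIndicator r (p ψ)}) (toFinite _)
  simp only [mem_insert_iff, mem_singleton_iff, forall_eq_or_imp, forall_eq] at hy
  obtain ⟨hyr, hyg, hyψ, hyχ⟩ := hy
  rw [h, rowHeight_eq_iff] at hyr
  obtain rfl | ⟨γ, rfl⟩ := hyr
  · exact hne hyg
  have hγ : γ ∈ E := by simp [E, hyg, Ne.symm hne]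
  have : γ = p ψ := by simpa [ψ, cellCoord, hγ] using hyψ
  rw [hcell, ← this] at hyχ
  simp [cellIndicator] at hyχ

theorem exists_apply_eq_of_mem_closure_of_rowHeight_eq (hp : p ∈ closure (range (evalMap X)))
    {r : ℕ} (h : p rowHeight = 1 / (r + 1)) :
    ∃ x, ∀ g : C(X, ℝ), g x = p g := by
  by_cases hcell : ∃ γ, p (cellIndicator r γ) ≠ 0
  · obtain ⟨γ, hγ⟩ := hcell
    refine ⟨cell r γ, fun g => ?_⟩
    obtain ⟨y, hy⟩ := exists_forall_apply_eq_of_mem_closure hp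
      (s := {cellIndicator r γ, g}) (toFinite _)
    simp only [mem_insert_iff, mem_singleton_iff, forall_eq_or_imp, forall_eq] at hy
    obtain rfl : y = cell r γ := by
      by_contra hne
      simp [cellIndicator, hne] at hy
      exact hγ hy.1.symm
    exact hy.2
  · push Not at hcell
    exact ⟨head r, apply_head_eq_of_mem_closure hp h hcell⟩

end Closure

theorem closure_range_evalMap_subset : closure (range (evalMap X)) ⊆ range (evalMap X) := by
  intro p hp
  suffices ∃ x, ∀ g : C(X, ℝ), g x = p g from this.imp fun x hx => funext hx
  obtain ⟨y, hy⟩ := exists_forall_apply_eq_of_mem_closure hp (s := {rowHeight}) (toFinite _)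
  simp only [mem_singleton_iff, forall_eq] at hy
  cases y with
  | head r => exact exists_apply_eq_of_mem_closure_of_rowHeight_eq hp hy.symm
  | cell r γ => exact exists_apply_eq_of_mem_closure_of_rowHeight_eq hp hy.symm
  | apex γ => exact ⟨_, apply_apex_eq_of_mem_closure hp hy.symm⟩

end CstarUnion

end

/-- There is a realcompact Tychonoff space `X` with closed copies `N₁, N₂`
of `ℕ`, each C*-embedded in `X`, neither meeting the closure of the other (so `N₁ ∪ N₂` is a
closed copy of `ℕ`), whose union is not C*-embedded in `X`. -/
theorem statement19 :
    ∃ (X : Type) (_ : TopologicalSpace X),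
      T2Space X ∧ CompletelyRegularSpace X ∧ Realcompact X ∧
      ∃ N₁ N₂ : Set X,
        ClosedCopyOfNat N₁ ∧ ClosedCopyOfNat N₂ ∧
        CstarEmbedded N₁ ∧ CstarEmbedded N₂ ∧
        N₁ ∩ closure N₂ = ∅ ∧ N₂ ∩ closure N₁ = ∅ ∧
        ClosedCopyOfNat (N₁ ∪ N₂) ∧
        ¬ CstarEmbedded (N₁ ∪ N₂) := by
  refine ⟨CstarUnion.X, inferInstance, inferInstance, inferInstance,
    realcompact_of_closure_range_evalMap_subset CstarUnion.closure_range_evalMap_subset, ?_⟩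
  open CstarUnion in
  exact ⟨heads 0, heads 1, closedCopyOfNat_heads 0, closedCopyOfNat_heads 1,
    cstarEmbedded_heads zero_lt_two, cstarEmbedded_heads one_lt_two,
    by rw [(closedCopyOfNat_heads 1).2.2.1.closure_eq, disjoint_heads_zero_one.inter_eq],
    by rw [(closedCopyOfNat_heads 0).2.2.1.closure_eq, disjoint_heads_zero_one.symm.inter_eq],
    closedCopyOfNat_heads_union, not_cstarEmbedded_heads_union⟩
end
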